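/- arXiv:2302.13067 — 3 statements merged into one kernel-verified Lean document; each statement's English description precedes it below -/
import Mathlib

section
/- Let f be a strictly decreasing function and define K(x,y) = f(||x-y||) on the unit sphere S^d in R^{d+1}. If a sequence (x_n) is constructed greedily, i.e., x_{n+1} minimizes the sum over i ≤ n of K(x, x_i) over x in S^d, starting from a single initial point x_1, then for all k ≥ 1, x_{2k} = -x_{2k-1}. -/
/-!
Induction on `k`. If the first `2j` points come in antipodal pairs, their potential `U` is even.
The point `a = x (2j+1)` minimizes `U` on the sphere, so the next point `b` satisfies
`U b + f ‖b - a‖ ≤ U (-a) + f 2 = U a + f 2 ≤ U b + f 2`, i.e. `f ‖b - a‖ ≤ f 2`.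
Since `f` is strictly decreasing and `‖b - a‖ ≤ 2`, this forces `‖b - a‖ = 2`, i.e. `b = -a`.
-/

open Finset

open scoped RealInnerProductSpace

section

variable {E : Type*} [NormedAddCommGroup E]

def potential (f : ℝ → ℝ) (x : ℕ → E) (n : ℕ) (y : E) : ℝ :=
  ∑ i ∈ Icc 1 n, f ‖y - x i‖

@[simp]
lemma potential_zero (f : ℝ → ℝ) (x : ℕ → E) (y : E) : potential f x 0 y = 0 := by
  simp [potential]

lemma potential_succ (f : ℝ → ℝ) (x : ℕ → E) (n : ℕ) (y : E) :
    potential f x (n + 1) y = potential f x n y + f ‖y - x (n + 1)‖ :=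
  sum_Icc_succ_top (by omega) _

lemma potential_neg_of_antipodal_pairs {f : ℝ → ℝ} {x : ℕ → E} {j : ℕ}
    (hpair : ∀ l ∈ Icc 1 j, x (2 * l) = -x (2 * l - 1)) (y : E) :
    potential f x (2 * j) (-y) = potential f x (2 * j) y := by
  induction j with
  | zero => simp
  | succ j ih =>
    have hlast : x (2 * j + 2) = -x (2 * j + 1) := hpair (j + 1) (by simp)
    have hprev : ∀ l ∈ Icc 1 j, x (2 * l) = -x (2 * l - 1) := fun l hl ↦
      hpair l (Icc_subset_Icc_right (Nat.le_succ j) hl)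
    have hswap : ∀ v : E, ‖-y - -v‖ = ‖y - v‖ := fun v ↦ by rw [neg_sub_neg, norm_sub_rev]
    rw [show 2 * (j + 1) = 2 * j + 1 + 1 by ring, potential_succ, potential_succ, potential_succ,
      potential_succ, ih hprev, hlast, hswap, ← hswap (-x _), neg_neg]
    ring

end

section

variable {E : Type*} [NormedAddCommGroup E] [InnerProductSpace ℝ E]

lemma eq_neg_of_norm_sub_eq_two {u v : E} (hu : ‖u‖ = 1) (hv : ‖v‖ = 1) (h : ‖u - v‖ = 2) :
    u = -v := by
  have hsq : ‖u - v‖ ^ 2 = 4 := by rw [h]; norm_num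
  rw [norm_sub_sq_real, hu, hv] at hsq
  have hinner : ⟪u, v⟫ = -1 := by linarith
  exact (inner_eq_neg_one_iff_of_norm_eq_one hu hv).mp hinner

lemma eq_neg_of_greedy_step_of_even {f : ℝ → ℝ} (hf : StrictAntiOn f (Set.Icc 0 2))
    {U : E → ℝ} (hU : ∀ y, U (-y) = U y) {a b : E} (ha : ‖a‖ = 1) (hb : ‖b‖ = 1)
    (ha_min : ∀ y, ‖y‖ = 1 → U a ≤ U y) (hb_le : U b + f ‖b - a‖ ≤ U (-a) + f ‖-a - a‖) :
    b = -a := by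
  have hdist_le : ‖b - a‖ ≤ 2 := by
    calc ‖b - a‖ ≤ ‖b‖ + ‖a‖ := norm_sub_le b a
      _ = 2 := by rw [ha, hb]; norm_num
  have hantipodal : ‖-a - a‖ = 2 := by
    rw [← neg_add', norm_neg, ← two_smul ℝ a, norm_smul, ha]; norm_num
  have hf_le : f ‖b - a‖ ≤ f 2 := by
    linarith [hU a, ha_min b hb, hantipodal ▸ hb_le]
  refine eq_neg_of_norm_sub_eq_two hb ha (hdist_le.eq_of_not_lt fun hlt ↦ ?_)
  exact (hf ⟨norm_nonneg _, hdist_le⟩ ⟨zero_le_two, le_rfl⟩ hlt).not_ge hf_le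

end

/-- If `f` is strictly decreasing on `[0,2]`, `K x y = f ‖x - y‖` on the unit sphere
`S^d ⊂ ℝ^{d+1}`, and the sequence `x 1, x 2, ...` is greedy (each `x (n+1)` minimizes the
total potential with respect to `x 1, ..., x n`), then `x (2k) = - x (2k-1)` for all `k ≥ 1`. -/
theorem greedy_antipodal (d : ℕ) (f : ℝ → ℝ)
    (hf : StrictAntiOn f (Set.Icc (0 : ℝ) 2))
    (x : ℕ → EuclideanSpace ℝ (Fin (d + 1)))
    (hx : ∀ n, 1 ≤ n → ‖x n‖ = 1)
    (hgreedy : ∀ n, 1 ≤ n → ∀ y : EuclideanSpace ℝ (Fin (d + 1)), ‖y‖ = 1 →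
      ∑ i ∈ Finset.Icc 1 n, f ‖x (n + 1) - x i‖ ≤ ∑ i ∈ Finset.Icc 1 n, f ‖y - x i‖) :
    ∀ k, 1 ≤ k → x (2 * k) = - x (2 * k - 1) := by
  have hpairs : ∀ j, ∀ l ∈ Icc 1 j, x (2 * l) = -x (2 * l - 1) := by
    intro j
    induction j with
    | zero => simp
    | succ j ih =>
      have hnext : x (2 * j + 2) = -x (2 * j + 1) := by
        refine eq_neg_of_greedy_step_of_even hf (potential_neg_of_antipodal_pairs (f := f) ih)
          (hx _ (by omega)) (hx _ (by omega)) (fun y hy ↦ ?_) ?_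
        · rcases j.eq_zero_or_pos with rfl | hj
          · simp
          · exact hgreedy (2 * j) (by omega) y hy
        · simpa only [potential, ← sum_Icc_succ_top (Nat.le_add_left 1 (2 * j))] using
            hgreedy (2 * j + 1) (by omega) (-x (2 * j + 1)) (by rw [norm_neg, hx _ (by omega)])
      intro l hl
      rcases (mem_Icc.mp hl).2.eq_or_lt with rfl | hlt
      · simpa [mul_add] using hnext
      · exact ih l (mem_Icc.mpr ⟨(mem_Icc.mp hl).1, by omega⟩)
  exact fun k hk ↦ hpairs k k (mem_Icc.mpr ⟨hk, le_rfl⟩)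
end

section
/- Let x_{n+1} ∈ S^2 and {x_1,...,x_n} ⊂ S^2, and suppose every closed hemisphere of S^2 contains a point x with Σ_{i=1}^n ||x - x_i|| ≥ 4n/3 - X for some X ≥ 0. Then max_{x ∈ S^2} Σ_{i=1}^{n+1} ||x - x_i|| ≥ √2 + 4n/3 - X. -/
open Finset Metric

/-! The new point `x_{n+1}` costs nothing to accommodate: apply the hypothesis to the hemisphere
centred at `-x_{n+1}`. The point `x` it provides satisfies `⟪x, x_{n+1}⟫ ≤ 0`, so
`‖x - x_{n+1}‖² = 2 - 2⟪x, x_{n+1}⟫ ≥ 2`, and adding this term to the old sum gives the bound. -/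

section InnerProduct

variable {F : Type*} [NormedAddCommGroup F] [InnerProductSpace ℝ F]

theorem norm_sq_add_norm_sq_le_norm_sub_sq_of_inner_nonpos {x y : F} (h : inner ℝ x y ≤ 0) :
    ‖x‖ ^ 2 + ‖y‖ ^ 2 ≤ ‖x - y‖ ^ 2 := by
  rw [norm_sub_sq_real]
  linarith

theorem sqrt_two_le_norm_sub_of_inner_nonpos {x y : F} (hx : ‖x‖ = 1) (hy : ‖y‖ = 1)
    (h : inner ℝ x y ≤ 0) : Real.sqrt 2 ≤ ‖x - y‖ := by
  have hsq := norm_sq_add_norm_sq_le_norm_sub_sq_of_inner_nonpos h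
  rw [hx, hy] at hsq
  exact Real.sqrt_le_iff.mpr ⟨norm_nonneg _, by linarith⟩

end InnerProduct

theorem hemisphere_growth_general (n : ℕ) (X : ℝ)
    (p : Fin (n + 1) → Metric.sphere (0 : EuclideanSpace ℝ (Fin 3)) 1)
    (hhemi : ∀ c : Metric.sphere (0 : EuclideanSpace ℝ (Fin 3)) 1,
      ∃ x : Metric.sphere (0 : EuclideanSpace ℝ (Fin 3)) 1,
        (0:ℝ) ≤ inner ℝ (x : EuclideanSpace ℝ (Fin 3)) (c : EuclideanSpace ℝ (Fin 3)) ∧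
        4 * n / 3 - X ≤ ∑ i : Fin n, ‖(x : EuclideanSpace ℝ (Fin 3)) - p i.castSucc‖) :
    ∃ x : Metric.sphere (0 : EuclideanSpace ℝ (Fin 3)) 1,
      Real.sqrt 2 + 4 * n / 3 - X ≤ ∑ i : Fin (n + 1), ‖(x : EuclideanSpace ℝ (Fin 3)) - p i‖ := by
  obtain ⟨x, hx_hemi, hx_sum⟩ := hhemi (-p (Fin.last n))
  have hx_far : Real.sqrt 2 ≤ ‖(x : EuclideanSpace ℝ (Fin 3)) - p (Fin.last n)‖ := by
    refine sqrt_two_le_norm_sub_of_inner_nonpos (norm_eq_of_mem_sphere x)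
      (norm_eq_of_mem_sphere _) ?_
    rw [coe_neg_sphere, inner_neg_right] at hx_hemi
    linarith
  refine ⟨x, ?_⟩
  rw [Fin.sum_univ_castSucc]
  linarith

/-- If every closed hemisphere of `S²` contains a point `x` with
`∑_{i=1}^n ‖x - x_i‖ ≥ 4n/3 - X`, then adding any further point `x_{n+1}` on `S²` yields
`max_{x ∈ S²} ∑_{i=1}^{n+1} ‖x - x_i‖ ≥ √2 + 4n/3 - X`. -/
theorem hemisphere_growth (n : ℕ) (X : ℝ) (hX : 0 ≤ X)
    (p : Fin (n + 1) → Metric.sphere (0 : EuclideanSpace ℝ (Fin 3)) 1)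
    (hhemi : ∀ c : Metric.sphere (0 : EuclideanSpace ℝ (Fin 3)) 1,
      ∃ x : Metric.sphere (0 : EuclideanSpace ℝ (Fin 3)) 1,
        (0:ℝ) ≤ inner ℝ (x : EuclideanSpace ℝ (Fin 3)) (c : EuclideanSpace ℝ (Fin 3)) ∧
        4 * n / 3 - X ≤ ∑ i : Fin n, ‖(x : EuclideanSpace ℝ (Fin 3)) - p i.castSucc‖) :
    ∃ x : Metric.sphere (0 : EuclideanSpace ℝ (Fin 3)) 1,
      Real.sqrt 2 + 4 * n / 3 - X ≤ ∑ i : Fin (n + 1), ‖(x : EuclideanSpace ℝ (Fin 3)) - p i‖ :=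
  hemisphere_growth_general n X p hhemi
end

section
/- For 0 < s and integers n ≥ 0, with Gegenbauer coefficient defined by f̂(n,d) = [Γ((d+1)/2) n! Γ(d-1)] / [√π Γ(d/2) Γ(n+d-1)] · ∫_{-1}^1 f(t) C_n^{(d-1)/2}(t) (1-t²)^{(d-2)/2} dt, the coefficients of f_{s,ε}(t) = (2 + ε - 2t)^{-s/2} are positive for every ε > 0. -/
open Real

/-- The Gegenbauer (ultraspherical) polynomials `C_n^λ`, defined by the standard three-term
recurrence `C_0 = 1`, `C_1(t) = 2λt`, `(n+2) C_{n+2}(t) = 2(n+1+λ) t C_{n+1}(t) - (n+2λ) C_n(t)`. -/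
noncomputable def gegenbauerFn (lam : ℝ) : ℕ → ℝ → ℝ
  | 0, _ => 1
  | 1, t => 2 * lam * t
  | (n + 2), t => (2 * ((n : ℝ) + 1 + lam) * t * gegenbauerFn lam (n + 1) t
      - ((n : ℝ) + 2 * lam) * gegenbauerFn lam n t) / ((n : ℝ) + 2)

/-- The `n`-th Gegenbauer coefficient of a function `f : [-1,1] → ℝ` on `S^d`:
`f̂(n,d) = [Γ((d+1)/2) n! Γ(d-1)] / [√π Γ(d/2) Γ(n+d-1)] ·
  ∫_{-1}^1 f(t) C_n^{(d-1)/2}(t) (1-t²)^{(d-2)/2} dt`. -/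
noncomputable def gegenbauerCoeff (f : ℝ → ℝ) (n d : ℕ) : ℝ :=
  (Real.Gamma (((d : ℝ) + 1) / 2) * (Nat.factorial n) * Real.Gamma ((d : ℝ) - 1)) /
      (Real.sqrt π * Real.Gamma ((d : ℝ) / 2) * Real.Gamma ((n : ℝ) + (d : ℝ) - 1)) *
    ∫ t in (-1 : ℝ)..1,
      f t * gegenbauerFn (((d : ℝ) - 1) / 2) n t * (1 - t ^ 2) ^ (((d : ℝ) - 2) / 2)

/-! With `w_μ(t) = (1 - t²)^(μ - 1/2)`, the product `w_μ C_{n+1}^μ` is a negative multiple of the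
derivative of `w_{μ+1} C_n^{μ+1}` (a step of Rodrigues' formula). Integrating by parts `n` times,
the boundary terms vanishing at `±1`, turns the `n`-th Gegenbauer coefficient of `f` into a
positive multiple of `∫ f⁽ⁿ⁾ w_{μ+n}`. Every derivative of `(2 + ε - 2t)^(-s/2)` is positive on
`[-1, 1]`, so this integral is positive. -/

namespace gegenbauerFn

variable (μ t : ℝ)

theorem add_two_mul (n : ℕ) :
    ((n : ℝ) + 2) * gegenbauerFn μ (n + 2) t =
      2 * ((n : ℝ) + 1 + μ) * t * gegenbauerFn μ (n + 1) t
        - ((n : ℝ) + 2 * μ) * gegenbauerFn μ n t := by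
  rw [gegenbauerFn]
  field_simp

theorem contiguous (n : ℕ) :
    ((n : ℝ) + 2) * gegenbauerFn μ (n + 2) t
        = 2 * μ * (t * gegenbauerFn (μ + 1) (n + 1) t - gegenbauerFn (μ + 1) n t) ∧
      2 * μ * (gegenbauerFn (μ + 1) (n + 1) t - t * gegenbauerFn (μ + 1) n t)
        = ((n : ℝ) + 1 + 2 * μ) * gegenbauerFn μ (n + 1) t := by
  induction n with
  | zero =>
    simp only [gegenbauerFn]
    constructor <;> field_simp <;> ring
  | succ n ih =>
    have hrec := add_two_mul μ t (n + 1)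
    have hrec₁ := add_two_mul (μ + 1) t n
    have hn : ((n : ℝ) + 2) ≠ 0 := by positivity
    push_cast at hrec ⊢
    constructor
    · refine mul_left_cancel₀ hn ?_
      linear_combination ((n : ℝ) + 2) * hrec + 2 * ((n : ℝ) + 2 + μ) * t * ih.1
        + ((n : ℝ) + 2) * ih.2 - 2 * μ * t * hrec₁
    · refine mul_left_cancel₀ hn ?_
      linear_combination 2 * μ * hrec₁ - ((n : ℝ) + 2 + 2 * μ) * ih.1

theorem one_sub_sq_mul_succ_param (n : ℕ) :
    2 * μ * (1 - t ^ 2) * gegenbauerFn (μ + 1) n t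
      = -((n : ℝ) + 1) * t * gegenbauerFn μ (n + 1) t + ((n : ℝ) + 2 * μ) * gegenbauerFn μ n t := by
  cases n with
  | zero =>
    simp only [gegenbauerFn]
    ring
  | succ n =>
    push_cast
    linear_combination t * (contiguous μ t n).1 + (contiguous μ t n).2

end gegenbauerFn

noncomputable def gegenbauerDeriv (μ : ℝ) : ℕ → ℝ → ℝ
  | 0, _ => 0
  | n + 1, t => 2 * μ * gegenbauerFn (μ + 1) n t

theorem hasDerivAt_gegenbauerFn (μ t : ℝ) :
    ∀ n : ℕ, HasDerivAt (gegenbauerFn μ n) (gegenbauerDeriv μ n t) t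
  | 0 => hasDerivAt_const t 1
  | 1 => by
    simpa [gegenbauerDeriv, gegenbauerFn] using (hasDerivAt_id t).const_mul (2 * μ)
  | n + 2 => by
    have hrec : gegenbauerFn μ (n + 2) = fun x => (2 * ((n : ℝ) + 1 + μ) * x *
        gegenbauerFn μ (n + 1) x - ((n : ℝ) + 2 * μ) * gegenbauerFn μ n x) / ((n : ℝ) + 2) := by
      ext x
      rw [gegenbauerFn]
    rw [hrec]
    refine (((((hasDerivAt_id t).const_mul (2 * ((n : ℝ) + 1 + μ))).mul
      (hasDerivAt_gegenbauerFn μ t (n + 1))).sub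
      ((hasDerivAt_gegenbauerFn μ t n).const_mul ((n : ℝ) + 2 * μ))).div_const
      ((n : ℝ) + 2)).congr_deriv ?_
    have hn : ((n : ℝ) + 2) ≠ 0 := by positivity
    rw [div_eq_iff hn, id]
    cases n with
    | zero =>
      simp only [gegenbauerDeriv, gegenbauerFn]
      ring
    | succ m =>
      have := (gegenbauerFn.contiguous μ t (m + 1)).2
      simp only [gegenbauerDeriv, show m + 1 + 1 = m + 2 from rfl] at this ⊢
      push_cast at this ⊢
      linear_combination -((m : ℝ) + 3) * this
        - ((m : ℝ) + 1 + 2 * μ) * (gegenbauerFn.contiguous μ t m).1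

theorem continuous_gegenbauerFn (μ : ℝ) (n : ℕ) : Continuous (gegenbauerFn μ n) :=
  continuous_iff_continuousAt.2 fun t => (hasDerivAt_gegenbauerFn μ t n).continuousAt

theorem gegenbauerFn.lowering (μ t : ℝ) (n : ℕ) :
    2 * μ * ((1 - t ^ 2) * gegenbauerDeriv (μ + 1) n t
        - 2 * t * (μ + 1 / 2) * gegenbauerFn (μ + 1) n t)
      = -(((n : ℝ) + 1) * ((n : ℝ) + 1 + 2 * μ)) * gegenbauerFn μ (n + 1) t := by
  cases n with
  | zero =>
    simp only [gegenbauerDeriv, gegenbauerFn]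
    ring
  | succ m =>
    simp only [gegenbauerDeriv, show m + 1 + 1 = m + 2 from rfl]
    push_cast
    linear_combination 2 * μ * gegenbauerFn.one_sub_sq_mul_succ_param (μ + 1) t m
      + ((m : ℝ) + 2 + 2 * μ) * (gegenbauerFn.contiguous μ t m).1

noncomputable def gegenbauerWeight (μ t : ℝ) : ℝ := (1 - t ^ 2) ^ (μ - 1 / 2)

theorem continuous_gegenbauerWeight {μ : ℝ} (hμ : 1 / 2 ≤ μ) : Continuous (gegenbauerWeight μ) :=
  (continuous_const.sub (continuous_pow 2)).rpow_const fun _ => Or.inr (by linarith)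

theorem gegenbauerWeight_pos (μ : ℝ) {t : ℝ} (ht : t ∈ Set.Ioo (-1 : ℝ) 1) :
    0 < gegenbauerWeight μ t :=
  Real.rpow_pos_of_pos (by nlinarith [ht.1, ht.2]) _

theorem hasDerivAt_gegenbauerWeight_mul_gegenbauerFn {μ : ℝ} (hμ : 1 / 2 ≤ μ) (n : ℕ)
    {t : ℝ} (ht : t ∈ Set.Icc (-1 : ℝ) 1) :
    HasDerivAt (fun x => gegenbauerFn (μ + 1) n x * gegenbauerWeight (μ + 1) x)
      (-(((n : ℝ) + 1) * ((n : ℝ) + 1 + 2 * μ) / (2 * μ)) *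
        (gegenbauerFn μ (n + 1) t * gegenbauerWeight μ t)) t := by
  have hweight : HasDerivAt (gegenbauerWeight (μ + 1))
      (-(2 * t) * (μ + 1 - 1 / 2) * (1 - t ^ 2) ^ (μ + 1 - 1 / 2 - 1)) t :=
    (((hasDerivAt_const t 1).sub (hasDerivAt_pow 2 t)).congr_deriv (by ring)).rpow_const
      (Or.inr (by linarith))
  refine ((hasDerivAt_gegenbauerFn (μ + 1) t n).mul hweight).congr_deriv ?_
  have ht2 : 0 ≤ 1 - t ^ 2 := by nlinarith [ht.1, ht.2]
  have hsplit : gegenbauerWeight (μ + 1) t = (1 - t ^ 2) * gegenbauerWeight μ t := by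
    rw [gegenbauerWeight, gegenbauerWeight, show μ + 1 - 1 / 2 = 1 + (μ - 1 / 2) by ring,
      Real.rpow_add' ht2 (by linarith), Real.rpow_one]
  rw [hsplit, show μ + 1 - 1 / 2 - 1 = μ - 1 / 2 by ring, ← gegenbauerWeight]
  have hμ0 : 2 * μ ≠ 0 := by positivity
  field_simp
  linear_combination gegenbauerWeight μ t * gegenbauerFn.lowering μ t n

theorem integral_mul_gegenbauerFn_succ {μ : ℝ} (hμ : 1 / 2 ≤ μ) (n : ℕ) {f f' : ℝ → ℝ}
    (hf : ∀ t ∈ Set.Icc (-1 : ℝ) 1, HasDerivAt f (f' t) t)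
    (hf' : ContinuousOn f' (Set.Icc (-1 : ℝ) 1)) :
    ∫ t in (-1 : ℝ)..1, f t * gegenbauerFn μ (n + 1) t * gegenbauerWeight μ t
      = 2 * μ / (((n : ℝ) + 1) * ((n : ℝ) + 1 + 2 * μ)) *
        ∫ t in (-1 : ℝ)..1, f' t * gegenbauerFn (μ + 1) n t * gegenbauerWeight (μ + 1) t := by
  have hIcc : Set.uIcc (-1 : ℝ) 1 = Set.Icc (-1) 1 := Set.uIcc_of_le (by norm_num)
  set K := ((n : ℝ) + 1) * ((n : ℝ) + 1 + 2 * μ)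
  have hK : K ≠ 0 := by positivity
  have hμ0 : 2 * μ ≠ 0 := by positivity
  have hibp := intervalIntegral.integral_mul_deriv_eq_deriv_mul (hIcc ▸ hf)
    (fun t ht => hasDerivAt_gegenbauerWeight_mul_gegenbauerFn hμ n (hIcc ▸ ht))
    ((hIcc ▸ hf').intervalIntegrable)
    ((continuous_const.mul ((continuous_gegenbauerFn μ (n + 1)).mul
      (continuous_gegenbauerWeight hμ))).intervalIntegrable _ _)
  have hvanish : ∀ t : ℝ, t ^ 2 = 1 → gegenbauerWeight (μ + 1) t = 0 := fun t ht => by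
    rw [gegenbauerWeight, ht, sub_self, Real.zero_rpow (by linarith)]
  simp only [hvanish 1 (by norm_num), hvanish (-1) (by norm_num), mul_zero,
    sub_zero, zero_sub] at hibp
  simp only [neg_mul, mul_neg, intervalIntegral.integral_neg, mul_left_comm (f _) (_ / (2 * μ)),
    intervalIntegral.integral_const_mul] at hibp
  simp only [mul_assoc]
  set I := ∫ t in (-1 : ℝ)..1, f t * (gegenbauerFn μ (n + 1) t * gegenbauerWeight μ t)
  set J := ∫ t in (-1 : ℝ)..1, f' t * (gegenbauerFn (μ + 1) n t * gegenbauerWeight (μ + 1) t)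
  field_simp at hibp ⊢
  linear_combination -hibp

theorem exists_pos_integral_mul_gegenbauerFn_eq (n : ℕ) :
    ∀ {μ : ℝ}, 1 / 2 ≤ μ → ∀ {F : ℕ → ℝ → ℝ},
      (∀ k, ∀ t ∈ Set.Icc (-1 : ℝ) 1, HasDerivAt (F k) (F (k + 1) t) t) →
      ∃ c : ℝ, 0 < c ∧
        ∫ t in (-1 : ℝ)..1, F 0 t * gegenbauerFn μ n t * gegenbauerWeight μ t
          = c * ∫ t in (-1 : ℝ)..1, F n t * gegenbauerWeight (μ + n) t := by
  induction n with
  | zero => exact fun _ _ _ => ⟨1, one_pos, by simp [gegenbauerFn]⟩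
  | succ n ih =>
    intro μ hμ F hF
    obtain ⟨c, hc, hrec⟩ := ih (μ := μ + 1) (by linarith) (F := fun k => F (k + 1))
      fun k => hF (k + 1)
    refine ⟨2 * μ / (((n : ℝ) + 1) * ((n : ℝ) + 1 + 2 * μ)) * c, by positivity, ?_⟩
    rw [integral_mul_gegenbauerFn_succ hμ n (hF 0)
      fun t ht => (hF 1 t ht).continuousAt.continuousWithinAt, hrec, Nat.cast_succ, ← add_assoc, add_right_comm μ 1, mul_assoc]

theorem gegenbauerCoeff_pos_of_hasDerivAt {F : ℕ → ℝ → ℝ}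
    (hF : ∀ k, ∀ t ∈ Set.Icc (-1 : ℝ) 1, HasDerivAt (F k) (F (k + 1) t) t) {n d : ℕ}
    (hd : 2 ≤ d) (hpos : ∀ t ∈ Set.Ioo (-1 : ℝ) 1, 0 < F n t) :
    0 < gegenbauerCoeff (F 0) n d := by
  have hd' : (2 : ℝ) ≤ d := by exact_mod_cast hd
  have hμ : 1 / 2 ≤ ((d : ℝ) - 1) / 2 := by linarith
  have hweight : ∀ t : ℝ,
      (1 - t ^ 2) ^ (((d : ℝ) - 2) / 2) = gegenbauerWeight (((d : ℝ) - 1) / 2) t :=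
    fun t => by rw [gegenbauerWeight]; ring_nf
  obtain ⟨c, hc, hred⟩ := exists_pos_integral_mul_gegenbauerFn_eq n hμ hF
  have hFn : ContinuousOn (F n) (Set.uIcc (-1 : ℝ) 1) := fun t ht =>
    (hF n t (Set.uIcc_of_le (by norm_num : (-1 : ℝ) ≤ 1) ▸ ht)).continuousAt.continuousWithinAt
  have hw : Continuous (gegenbauerWeight (((d : ℝ) - 1) / 2 + n)) :=
    continuous_gegenbauerWeight (by linarith [n.cast_nonneg (α := ℝ)])
  have hintegral : 0 < ∫ t in (-1 : ℝ)..1, F n t * gegenbauerWeight (((d : ℝ) - 1) / 2 + n) t :=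
    intervalIntegral.intervalIntegral_pos_of_pos_on (hFn.mul hw.continuousOn).intervalIntegrable
      (fun t ht => mul_pos (hpos t ht) (gegenbauerWeight_pos _ ht)) (by norm_num)
  have hnormalization : 0 < Real.Gamma (((d : ℝ) + 1) / 2) * (Nat.factorial n) *
      Real.Gamma ((d : ℝ) - 1) / (Real.sqrt π * Real.Gamma ((d : ℝ) / 2) *
        Real.Gamma ((n : ℝ) + (d : ℝ) - 1)) := by
    have := Real.Gamma_pos_of_pos (s := ((d : ℝ) + 1) / 2) (by positivity)
    have := Real.Gamma_pos_of_pos (s := (d : ℝ) - 1) (by linarith)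
    have := Real.Gamma_pos_of_pos (s := (d : ℝ) / 2) (by positivity)
    have := Real.Gamma_pos_of_pos (s := (n : ℝ) + d - 1) (by linarith [n.cast_nonneg (α := ℝ)])
    have := Real.sqrt_pos.2 Real.pi_pos
    positivity
  rw [gegenbauerCoeff]
  simp only [hweight, hred]
  positivity

noncomputable def smoothedRieszIteratedDeriv (s a : ℝ) (k : ℕ) (t : ℝ) : ℝ :=
  (∏ j ∈ Finset.range k, (s + 2 * j)) * (a - 2 * t) ^ (-(s / 2) - k)

theorem hasDerivAt_smoothedRieszIteratedDeriv (s a : ℝ) (k : ℕ) {t : ℝ} (ht : a - 2 * t ≠ 0) :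
    HasDerivAt (smoothedRieszIteratedDeriv s a k) (smoothedRieszIteratedDeriv s a (k + 1) t) t := by
  refine ((((hasDerivAt_id t).const_mul 2).const_sub a).rpow_const (Or.inl ht)).const_mul
    (∏ j ∈ Finset.range k, (s + 2 * j)) |>.congr_deriv ?_
  rw [smoothedRieszIteratedDeriv, Finset.prod_range_succ, Nat.cast_succ, sub_add_eq_sub_sub, id]
  ring

theorem smoothedRieszIteratedDeriv_pos {s a : ℝ} (hs : 0 < s) (k : ℕ) {t : ℝ}
    (ht : 0 < a - 2 * t) : 0 < smoothedRieszIteratedDeriv s a k t :=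
  mul_pos (Finset.prod_pos fun j _ => by positivity) (Real.rpow_pos_of_pos ht _)

/-- For `s > 0`, `ε > 0` and `d ≥ 2`, all Gegenbauer coefficients of the smoothed Riesz kernel
`f_{s,ε}(t) = (2 + ε - 2t)^{-s/2}` are positive. -/
theorem gegenbauerCoeff_smoothedRiesz_pos (d : ℕ) (hd : 2 ≤ d) (s ε : ℝ)
    (hs : 0 < s) (hε : 0 < ε) (n : ℕ) :
    0 < gegenbauerCoeff (fun t => (2 + ε - 2 * t) ^ (-(s / 2))) n d := by
  have hbase : ∀ t ∈ Set.Icc (-1 : ℝ) 1, 0 < 2 + ε - 2 * t := fun t ht => by linarith [ht.2]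
  have hkernel :
      (fun t => (2 + ε - 2 * t) ^ (-(s / 2))) = smoothedRieszIteratedDeriv s (2 + ε) 0 := by
    ext t
    simp [smoothedRieszIteratedDeriv]
  rw [hkernel]
  exact gegenbauerCoeff_pos_of_hasDerivAt
    (fun k t ht => hasDerivAt_smoothedRieszIteratedDeriv s (2 + ε) k (hbase t ht).ne') hd
    fun t ht => smoothedRieszIteratedDeriv_pos hs n (hbase t (Set.Ioo_subset_Icc_self ht))
end
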